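/- arXiv:1807.08236 — 3 statements merged into one kernel-verified Lean document; each statement's English description precedes it below -/
import Mathlib

section
/- Let G₁ and G₂ be groups and H a normal subgroup of the product group G₁ × G₂ of finite index n. Then there exist normal subgroups H₁ of G₁ and H₂ of G₂ such that the product subgroup H₁ × H₂ is contained in H, [Gᵢ : Hᵢ] ≤ n for i = 1, 2, and [G₁ × G₂ : H₁ × H₂] ≤ n². -/
/-- Let `G₁` and `G₂` be groups and `H` a normal subgroup of `G₁ × G₂` of finite index `n`.
Then there exist normal subgroups `H₁ ≤ G₁` and `H₂ ≤ G₂` such that `H₁ × H₂ ⊆ H`,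
`[Gᵢ : Hᵢ] ≤ n`, and `[G₁ × G₂ : H₁ × H₂] ≤ n²`. -/
theorem second_algebraic_lemma {G₁ G₂ : Type*} [Group G₁] [Group G₂]
    (H : Subgroup (G₁ × G₂)) (hH : H.Normal) (n : ℕ) (hn : H.index = n) (hpos : n ≠ 0) :
    ∃ (H₁ : Subgroup G₁) (H₂ : Subgroup G₂), H₁.Normal ∧ H₂.Normal ∧
      H₁.prod H₂ ≤ H ∧ H₁.index ≤ n ∧ H₂.index ≤ n ∧ (H₁.prod H₂).index ≤ n ^ 2 := by
  refine ⟨H.comap (MonoidHom.inl G₁ G₂), H.comap (MonoidHom.inr G₁ G₂),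
    hH.comap _, hH.comap _, ?_, ?_, ?_, ?_⟩
  · rintro ⟨x, y⟩ ⟨hx, hy⟩
    have : (x, y) = (x, 1) * (1, y) := by simp
    rw [this]
    exact H.mul_mem hx hy
  · calc (H.comap (MonoidHom.inl G₁ G₂)).index = H.relIndex (MonoidHom.inl G₁ G₂).range :=
        Subgroup.index_comap _ _
      _ ≤ H.relIndex ⊤ := Subgroup.relIndex_le_of_le_right le_top
        (by rw [Subgroup.relIndex_top_right, hn]; exact hpos)
      _ = n := by rw [Subgroup.relIndex_top_right, hn]
  · calc (H.comap (MonoidHom.inr G₁ G₂)).index = H.relIndex (MonoidHom.inr G₁ G₂).range :=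
        Subgroup.index_comap _ _
      _ ≤ H.relIndex ⊤ := Subgroup.relIndex_le_of_le_right le_top
        (by rw [Subgroup.relIndex_top_right, hn]; exact hpos)
      _ = n := by rw [Subgroup.relIndex_top_right, hn]
  · rw [Subgroup.index_prod, pow_two]
    refine Nat.mul_le_mul ?_ ?_ <;>
    · rw [Subgroup.index_comap]
      refine le_trans (Subgroup.relIndex_le_of_le_right le_top
        (by rw [Subgroup.relIndex_top_right, hn]; exact hpos)) ?_
      rw [Subgroup.relIndex_top_right, hn]
end

section
/- Let G₁ and G₂ be groups and H a subgroup of the product group G₁ × G₂ of finite index n. Then there exist normal subgroups H₁ of G₁ and H₂ of G₂, each of finite index at most n!, such that the product subgroup H₁ × H₂ is contained in H. -/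
/-- Let `G₁` and `G₂` be groups and `H` a subgroup of `G₁ × G₂` of finite index `n`. Then
there exist normal subgroups `H₁ ≤ G₁` and `H₂ ≤ G₂`, each of finite index at most `n!`,
such that `H₁ × H₂ ⊆ H`. -/
theorem combined_algebraic_lemma {G₁ G₂ : Type*} [Group G₁] [Group G₂]
    (H : Subgroup (G₁ × G₂)) (n : ℕ) (hn : H.index = n) (hpos : n ≠ 0) :
    ∃ (H₁ : Subgroup G₁) (H₂ : Subgroup G₂), H₁.Normal ∧ H₂.Normal ∧
      H₁.index ≠ 0 ∧ H₁.index ≤ Nat.factorial n ∧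
      H₂.index ≠ 0 ∧ H₂.index ≤ Nat.factorial n ∧
      H₁.prod H₂ ≤ H := by
  set G := G₁ × G₂
  have hfi : H.FiniteIndex := ⟨hn ▸ hpos⟩
  set N := H.normalCore with hN
  have hNnorm : N.Normal := H.normalCore_normal
  have hNle : N ≤ H := H.normalCore_le
  -- finiteness of the quotient
  have hfin : Finite (G ⧸ H) := by
    have : Nat.card (G ⧸ H) ≠ 0 := by rwa [← Subgroup.index, hn]
    exact Nat.finite_of_card_ne_zero this
  have hcard : Nat.card (G ⧸ H) = n := hn
  -- index of the normal core is at most n!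
  have hNindex : N.index ≤ Nat.factorial n := by
    rw [hN, Subgroup.normalCore_eq_ker, Subgroup.index_ker]
    have hinj : Function.Injective
        (Subtype.val : (MulAction.toPermHom G (G ⧸ H)).range → Equiv.Perm (G ⧸ H)) :=
      Subtype.val_injective
    calc Nat.card (MulAction.toPermHom G (G ⧸ H)).range
        ≤ Nat.card (Equiv.Perm (G ⧸ H)) := Nat.card_le_card_of_injective _ hinj
      _ = Nat.factorial n := by
          classical
          have : Fintype (G ⧸ H) := Fintype.ofFinite _
          rw [Nat.card_eq_fintype_card, Fintype.card_perm, ← hcard, Nat.card_eq_fintype_card]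
  have hNfi : N.FiniteIndex := H.finiteIndex_normalCore
  refine ⟨N.comap (MonoidHom.inl G₁ G₂), N.comap (MonoidHom.inr G₁ G₂),
    Subgroup.Normal.comap hNnorm _, Subgroup.Normal.comap hNnorm _, ?_, ?_, ?_, ?_, ?_⟩
  · rw [Subgroup.index_comap]
    intro h0
    exact hNfi.index_ne_zero (Nat.eq_zero_of_zero_dvd (h0 ▸ Subgroup.relIndex_dvd_index_of_normal N _))
  · rw [Subgroup.index_comap]
    exact le_trans (Nat.le_of_dvd (Nat.pos_of_ne_zero hNfi.index_ne_zero)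
      (Subgroup.relIndex_dvd_index_of_normal N _)) hNindex
  · rw [Subgroup.index_comap]
    intro h0
    exact hNfi.index_ne_zero (Nat.eq_zero_of_zero_dvd (h0 ▸ Subgroup.relIndex_dvd_index_of_normal N _))
  · rw [Subgroup.index_comap]
    exact le_trans (Nat.le_of_dvd (Nat.pos_of_ne_zero hNfi.index_ne_zero)
      (Subgroup.relIndex_dvd_index_of_normal N _)) hNindex
  · rintro ⟨a, b⟩ ⟨ha, hb⟩
    have : ((a, b) : G) = (a, 1) * (1, b) := by simp
    exact hNle (this ▸ mul_mem ha hb)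
end

section
/- Let (Λ, μ) be a measure space with μ ≠ 0, E a real vector space, S a convex subset of E, and f : Λ → E → ℝ a family of functions such that for each λ ∈ Λ the function f(λ, ·) is strictly convex on S, and for each x ∈ S the function λ ↦ f(λ, x) is integrable with respect to μ. Then the function g : S → ℝ defined by g(x) = ∫_Λ f(λ, x) dμ(λ) is strictly convex on S. -/
open MeasureTheory

/-- The integral of a family of strictly convex functions over a nonzero measure is
strictly convex. -/
theorem integral_strictConvexOn {Λ : Type*} [MeasurableSpace Λ] (μ : Measure Λ)
    (hμ : μ ≠ 0) {E : Type*} [AddCommGroup E] [Module ℝ E] (S : Set E) (hS : Convex ℝ S)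
    (f : Λ → E → ℝ) (hconv : ∀ l : Λ, StrictConvexOn ℝ S (f l))
    (hint : ∀ x ∈ S, Integrable (fun l : Λ => f l x) μ) :
    StrictConvexOn ℝ S (fun x : E => ∫ l, f l x ∂μ) := by
  refine ⟨hS, fun x hx y hy hxy a b ha hb hab => ?_⟩
  have hz : a • x + b • y ∈ S := hS hx hy ha.le hb.le hab
  set g : Λ → ℝ := fun l => a * f l x + b * f l y - f l (a • x + b • y) with hg
  have hgpos : ∀ l, 0 < g l := fun l => sub_pos.2 ((hconv l).2 hx hy hxy ha hb hab)
  have hgint : Integrable g μ :=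
    (((hint x hx).const_mul a).add ((hint y hy).const_mul b)).sub (hint _ hz)
  have h0 : 0 < ∫ l, g l ∂μ := by
    rw [integral_pos_iff_support_of_nonneg (fun l => (hgpos l).le) hgint]
    have : Function.support g = Set.univ := Set.eq_univ_of_forall fun l => (hgpos l).ne'
    rw [this]
    simpa [Measure.measure_univ_eq_zero] using hμ
  have hax : Integrable (fun l => a * f l x) μ := (hint x hx).const_mul a
  have hby : Integrable (fun l => b * f l y) μ := (hint y hy).const_mul b
  have hsum : Integrable (fun l => a * f l x + b * f l y) μ := hax.add hby
  have key : ∫ l, g l ∂μ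
      = a * ∫ l, f l x ∂μ + b * ∫ l, f l y ∂μ - ∫ l, f l (a • x + b • y) ∂μ := by
    rw [hg, integral_sub hsum (hint _ hz), integral_add hax hby,
      integral_const_mul, integral_const_mul]
  rw [key, sub_pos] at h0
  simpa [smul_eq_mul] using h0
end
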